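/- Let U_D(λ) be infinite, f the enumeration of the complete D-visit from λ, and i < h. If infinitely many nodes in the range of f are d_i-children of other nodes in the range of f, then infinitely many stable nodes in the range of f are d_i-children of other nodes in the range of f. -/

import Mathlib

/-- A `k`-ary tree: a prefix-closed set of finite lists over colors `< k`,
containing the empty list. -/
def IsKTree (k : ℕ) (U : Set (List ℕ)) : Prop :=
  [] ∈ U ∧ (∀ l ∈ U, ∀ p : List ℕ, p <+: l → p ∈ U) ∧ ∀ l ∈ U, ∀ c ∈ l, c < k

/-- `L` is `D`-complete: every child (in `U`) with color in `D` of a node of `L` is in `L`. -/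
def DComplete (U : Set (List ℕ)) (D : List ℕ) (L : List (List ℕ)) : Prop :=
  ∀ μ ∈ L, ∀ d ∈ D, μ ++ [d] ∈ U → μ ++ [d] ∈ L

/-- `ν` is the `n`-th `d`-expansion of `M`: `ν = μ ++ [d] ∈ U` for some `μ ∈ M`, and exactly
`n` nodes of `M` lexicographically below `μ` have a `d`-child in `U`. -/
def DExpansion (U : Set (List ℕ)) (M : List (List ℕ)) (n d : ℕ) (ν : List ℕ) : Prop :=
  ν ∈ U ∧ ∃ μ ∈ M, ν = μ ++ [d] ∧
    {η | η ∈ M ∧ η ++ [d] ∈ U ∧ List.Lex (· < ·) η μ}.ncard = n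

/-- `DVisit U D lam L` : `L` is a `D`-visit of `U` from `lam`. -/
inductive DVisit (U : Set (List ℕ)) : List ℕ → List ℕ → List (List ℕ) → Prop
  | base (lam : List ℕ) : lam ∈ U → DVisit U [] lam [lam]
  | step (d : ℕ) (D : List ℕ) (lam : List ℕ) (M : List (List ℕ))
      (Ls : List (List (List ℕ))) :
      DVisit U D lam M →
      (1 < Ls.length → DComplete U D M) →
      (∀ j : Fin Ls.length, Ls.get j ≠ []) →
      (∀ j : Fin Ls.length, DExpansion U M j.1 d ((Ls.get j).headI)) →
      (∀ j : Fin Ls.length, DVisit U (D ++ [d]) ((Ls.get j).headI) (Ls.get j)) →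
      (∀ j : Fin Ls.length, j.1 + 1 < Ls.length → DComplete U (d :: D) (Ls.get j)) →
      DVisit U (d :: D) lam (M ++ Ls.flatten)

/-- `U_D(lam)`: the nodes of `U` extending `lam` by a suffix with colors only from `D`. -/
def subtreeD (U : Set (List ℕ)) (D : List ℕ) (lam : List ℕ) : Set (List ℕ) :=
  {μ | μ ∈ U ∧ ∃ η : List ℕ, μ = lam ++ η ∧ ∀ c ∈ η, c ∈ D}

/-- `f` enumerates the complete `D`-visit of `U` from `lam`:
each initial segment `[f 0, …, f m]` is a `D`-visit from `lam`. -/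
def Enumerates (U : Set (List ℕ)) (D lam : List ℕ) (f : ℕ → List ℕ) : Prop :=
  ∀ m : ℕ, DVisit U D lam ((List.range (m + 1)).map f)

/-- `μ` is stable for the enumeration `f`: all later nodes are proper descendants of `μ`. -/
def Stable (f : ℕ → List ℕ) (μ : List ℕ) : Prop :=
  ∃ m, f m = μ ∧ ∀ n, m < n → μ <+: f n ∧ μ ≠ f n

/-- `r` is an infinite branch of the tree `T` (of finite lists): an infinite chain
under the prefix order, downward closed within `T`. -/
def IsInfBranchL (T : Set (List ℕ)) (r : Set (List ℕ)) : Prop :=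
  r ⊆ T ∧ r.Infinite ∧ (∀ μ ∈ r, ∀ ν ∈ r, μ <+: ν ∨ ν <+: μ) ∧
  (∀ μ ∈ r, ∀ η ∈ T, η <+: μ → η ∈ r)


open List

/-!
A complete `(c :: Cs)`-visit from `lam` is a `Cs`-visit `M` followed by blocks, each a complete
`(Cs ++ [c])`-visit rooted at a `c`-child of a node of `M`. Along an enumeration, `M` is the
longest initial run inside `U_Cs(lam)`, so it is fixed once some node leaves `U_Cs(lam)`; since
the enumeration is injective, only finitely many `c`-children of `M` ever occur, so the root of
the last block is stable and from there on the enumeration is a complete `(Cs ++ [c])`-visit. If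
no node leaves `U_Cs(lam)`, the enumeration is a complete `Cs`-visit instead. Either way the
position of `d_i` in the color list drops, so a stable `d_i`-child is reached, and repeating from
it yields such children arbitrarily far out.
-/

section Blocks

variable {α : Type*} {Q : α → Prop} {Ls : List (List α)}

theorem head_of_flatten_eq_cons (hLs : ∀ B ∈ Ls, ∃ b T, B = b :: T ∧ Q b ∧ ∀ t ∈ T, ¬Q t)
    {x : α} {Y : List α} (h : Ls.flatten = x :: Y) : Q x := by
  obtain _ | ⟨B, Ls⟩ := Ls
  · simp at h
  · obtain ⟨b, T, rfl, hb, -⟩ := hLs B mem_cons_self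
    obtain ⟨rfl, -⟩ := cons_eq_cons.mp h
    exact hb

theorem mem_of_flatten_eq_append_cons
    (hLs : ∀ B ∈ Ls, ∃ b T, B = b :: T ∧ Q b ∧ ∀ t ∈ T, ¬Q t)
    {X Y : List α} {x : α} (h : Ls.flatten = X ++ x :: Y) (hx : Q x) (hY : ∀ y ∈ Y, ¬Q y) :
    x :: Y ∈ Ls := by
  induction Ls generalizing X with
  | nil => simp at h
  | cons B Ls ih =>
    have ih' : ∀ {X'}, Ls.flatten = X' ++ x :: Y → x :: Y ∈ B :: Ls := fun h' =>
      mem_cons_of_mem _ (ih (fun B' hB' => hLs B' (mem_cons_of_mem _ hB')) h')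
    obtain ⟨b, T, rfl, -, hT⟩ := hLs _ mem_cons_self
    rw [flatten_cons] at h
    obtain _ | ⟨z, X⟩ := X
    · obtain ⟨rfl, hY'⟩ := cons_eq_cons.mp h
      obtain _ | ⟨B', Ls'⟩ := Ls
      · simpa using hY'.symm
      · obtain ⟨b', T', rfl, hb', -⟩ := hLs B' (by simp)
        exact absurd hb' (hY b' (by simp [← hY']))
    · rw [cons_append, cons_append, cons_eq_cons, append_eq_append_iff] at h
      obtain ⟨-, ⟨X', -, hX'⟩ | ⟨_ | ⟨x', Z⟩, hTX, hZ⟩⟩ := h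
      · exact ih' hX'
      · exact ih' (X' := []) (by simpa using hZ.symm)
      · obtain ⟨rfl, -⟩ := cons_eq_cons.mp hZ
        exact absurd hx (hT x (by simp [hTX]))

end Blocks

section

variable {U : Set (List ℕ)}

theorem subtreeD_mono {C C' lam : List ℕ} (h : C ⊆ C') : subtreeD U C lam ⊆ subtreeD U C' lam :=
  fun _ ⟨hU, η, hη, hηC⟩ => ⟨hU, η, hη, fun x hx => h (hηC x hx)⟩

theorem mem_subtreeD_trans {C lam μ ν : List ℕ} (hμ : μ ∈ subtreeD U C lam)
    (hν : ν ∈ subtreeD U C μ) : ν ∈ subtreeD U C lam := by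
  obtain ⟨-, η₀, rfl, hη₀⟩ := hμ
  obtain ⟨hU, η, rfl, hη⟩ := hν
  exact ⟨hU, η₀ ++ η, append_assoc _ _ _, by simpa [or_imp, forall_and] using ⟨hη₀, hη⟩⟩

theorem not_mem_subtreeD_of_append_prefix {Cs lam μ ν : List ℕ} {c : ℕ} (hc : c ∉ Cs)
    (hμ : μ ∈ subtreeD U Cs lam) (hμν : μ ++ [c] <+: ν) : ν ∉ subtreeD U Cs lam := by
  rintro ⟨-, η, rfl, hη⟩
  obtain ⟨-, η₀, rfl, -⟩ := hμ
  rw [append_assoc, prefix_append_right_inj] at hμν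
  exact hc (hη c (hμν.subset (by simp)))

theorem not_mem_subtreeD_of_getLast? {Cs lam ν : List ℕ} {c : ℕ} (hc : c ∉ Cs)
    (hν : ν ≠ lam) (hlast : ν.getLast? = some c) : ν ∉ subtreeD U Cs lam := by
  rintro ⟨-, η, rfl, hη⟩
  have hη₀ : η ≠ [] := by rintro rfl; simp at hν
  rw [getLast?_append_of_ne_nil _ hη₀] at hlast
  exact hc (hη c (mem_of_getLast? hlast))

theorem eq_of_append_prefix {Cs lam μ μ' ν : List ℕ} {c : ℕ} (hc : c ∉ Cs)
    (hμ : μ ∈ subtreeD U Cs lam) (hμ' : μ' ∈ subtreeD U Cs lam)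
    (h : μ ++ [c] <+: ν) (h' : μ' ++ [c] <+: ν) : μ = μ' := by
  have hcancel : ∀ {a b}, a ∈ subtreeD U Cs lam → b ∈ subtreeD U Cs lam → a ++ [c] <+: b ++ [c] →
      a = b := fun ha hb hab => (prefix_concat_iff.mp hab).elim append_cancel_right
    fun hab => absurd hb (not_mem_subtreeD_of_append_prefix hc ha hab)
  rcases prefix_or_prefix_of_prefix h h' with h₁ | h₁
  · exact hcancel hμ hμ' h₁
  · exact (hcancel hμ' hμ h₁).symm

namespace DVisit

theorem eq_cons_tail {C lam : List ℕ} {L : List (List ℕ)} (h : DVisit U C lam L) :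
    L = lam :: L.tail := by
  induction h with
  | base => rfl
  | step _ _ _ _ _ _ _ _ _ _ _ ihM => rw [ihM]; rfl

theorem mem_subtreeD {C lam : List ℕ} {L : List (List ℕ)} (h : DVisit U C lam L) :
    ∀ ν ∈ L, ν ∈ subtreeD U C lam := by
  induction h with
  | base lam hlam =>
    rintro ν hν
    rw [mem_singleton.mp hν]
    exact ⟨hlam, [], by simp, by simp⟩
  | step d D lam M Ls _ _ _ hexp _ _ ihM ihLs =>
    intro ν hν
    rcases mem_append.mp hν with hν | hν
    · exact subtreeD_mono (subset_cons_self d D) (ihM ν hν)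
    · obtain ⟨B, hB, hνB⟩ := mem_flatten.mp hν
      obtain ⟨j, rfl⟩ := mem_iff_get.mp hB
      obtain ⟨hU, μ, hμ, hhead, -⟩ := hexp j
      have hhead' : (Ls.get j).headI ∈ subtreeD U (d :: D) μ := ⟨hU, [d], hhead, by simp⟩
      have hν' := subtreeD_mono (C' := d :: D) (by simp [subset_def, or_comm]) (ihLs j ν hνB)
      exact mem_subtreeD_trans (mem_subtreeD_trans
        (subtreeD_mono (subset_cons_self d D) (ihM μ hμ)) hhead') hν'

theorem nodup {C lam : List ℕ} {L : List (List ℕ)} (h : DVisit U C lam L) (hC : C.Nodup) :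
    L.Nodup := by
  induction h with
  | base => exact nodup_singleton _
  | step d D lam M Ls hM _ _ hexp hvis _ ihM ihLs =>
    have hd : d ∉ D := (nodup_cons.mp hC).1
    have hMD := hM.mem_subtreeD
    have hblock : ∀ j, ∀ ν ∈ Ls.get j, ∃ μ ∈ M, μ ++ [d] <+: ν ∧
        {η | η ∈ M ∧ η ++ [d] ∈ U ∧ List.Lex (· < ·) η μ}.ncard = j := by
      intro j ν hν
      obtain ⟨-, μ, hμ, hhead, hcard⟩ := hexp j
      obtain ⟨-, η, rfl, -⟩ := (hvis j).mem_subtreeD ν hν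
      exact ⟨μ, hμ, hhead ▸ prefix_append _ _, hcard⟩
    refine (ihM (nodup_cons.mp hC).2).append (nodup_flatten.mpr ⟨?_, ?_⟩) ?_
    · intro B hB
      obtain ⟨j, rfl⟩ := mem_iff_get.mp hB
      exact ihLs j ((perm_append_singleton d D).nodup_iff.mpr hC)
    · refine pairwise_iff_get.mpr fun i j hij ν hνi hνj => hij.ne (Fin.ext ?_)
      obtain ⟨μi, hμi, hi, hci⟩ := hblock i ν hνi
      obtain ⟨μj, hμj, hj, hcj⟩ := hblock j ν hνj
      rw [← hci, ← hcj, eq_of_append_prefix hd (hMD μi hμi) (hMD μj hμj) hi hj]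
    · intro ν hνM hνF
      obtain ⟨B, hB, hνB⟩ := mem_flatten.mp hνF
      obtain ⟨j, rfl⟩ := mem_iff_get.mp hB
      obtain ⟨μ, hμ, hμν, -⟩ := hblock j ν hνB
      exact not_mem_subtreeD_of_append_prefix hd (hMD μ hμ) hμν (hMD ν hνM)

end DVisit


def IsBlockExtension (U : Set (List ℕ)) (c : ℕ) (Cs : List ℕ) (M L : List (List ℕ)) : Prop :=
  ∃ Ls : List (List (List ℕ)), L = M ++ Ls.flatten ∧
    ∀ B ∈ Ls, (∃ μ ∈ M, B.headI = μ ++ [c]) ∧ DVisit U (Cs ++ [c]) B.headI B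

theorem DVisit.exists_isBlockExtension {c : ℕ} {Cs lam : List ℕ} {L : List (List ℕ)}
    (h : DVisit U (c :: Cs) lam L) : ∃ M, DVisit U Cs lam M ∧ IsBlockExtension U c Cs M L := by
  generalize hC : c :: Cs = C at h
  obtain _ | ⟨_, _, _, M, Ls, hM, -, -, hexp, hvis, -⟩ := h
  · simp at hC
  · obtain ⟨rfl, rfl⟩ := cons_eq_cons.mp hC
    refine ⟨M, hM, Ls, rfl, fun B hB => ?_⟩
    obtain ⟨j, rfl⟩ := mem_iff_get.mp hB
    obtain ⟨-, μ, hμ, hhead, -⟩ := hexp j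
    exact ⟨⟨μ, hμ, hhead⟩, hvis j⟩

open Classical in
theorem IsBlockExtension.eq_takeWhile {c : ℕ} {Cs lam : List ℕ} {M L : List (List ℕ)}
    (h : IsBlockExtension U c Cs M L) (hc : c ∉ Cs) (hM : DVisit U Cs lam M) :
    L.takeWhile (· ∈ subtreeD U Cs lam) = M := by
  obtain ⟨Ls, rfl, hLs⟩ := h
  rw [takeWhile_append_of_pos (by simpa using hM.mem_subtreeD), append_right_eq_self]
  obtain _ | ⟨B, Ls⟩ := Ls
  · rfl
  · obtain ⟨⟨μ, hμ, hhead⟩, hB⟩ := hLs B mem_cons_self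
    rw [flatten_cons, hB.eq_cons_tail, cons_append, takeWhile_cons_of_neg]
    simpa using not_mem_subtreeD_of_append_prefix hc (hM.mem_subtreeD μ hμ) (hhead ▸ prefix_rfl)

theorem DVisit.not_child_of_mem_tail {c : ℕ} {Cs lam : List ℕ} {M B : List (List ℕ)}
    (hnd : (c :: Cs).Nodup) (hM : DVisit U Cs lam M) (hB : DVisit U (Cs ++ [c]) B.headI B)
    (hhead : ∃ μ ∈ M, B.headI = μ ++ [c]) : ∀ t ∈ B.tail, ¬∃ μ ∈ M, t = μ ++ [c] := by
  rintro t ht ⟨μ', hμ', rfl⟩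
  obtain ⟨μ, hμ, hhead⟩ := hhead
  have hB' := hB.nodup ((perm_append_singleton c Cs).nodup_iff.mpr hnd)
  rw [hB.eq_cons_tail] at hB'
  obtain ⟨-, η, ht', -⟩ := hB.mem_subtreeD _ (mem_of_mem_tail ht)
  have := eq_of_append_prefix (nodup_cons.mp hnd).1 (hM.mem_subtreeD μ hμ)
    (hM.mem_subtreeD μ' hμ') (hhead ▸ ht' ▸ prefix_append _ _) prefix_rfl
  subst this
  exact (nodup_cons.mp hB').1 (hhead ▸ ht)

namespace Enumerates

variable {C lam : List ℕ} {g : ℕ → List ℕ}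

theorem apply_zero (hg : Enumerates U C lam g) : g 0 = lam :=
  (cons_eq_cons.mp (hg 0).eq_cons_tail).1

theorem mem_subtreeD (hg : Enumerates U C lam g) (n : ℕ) : g n ∈ subtreeD U C lam :=
  (hg n).mem_subtreeD _ (mem_map_of_mem (mem_range.mpr n.lt_succ_self))

theorem injective (hg : Enumerates U C lam g) (hC : C.Nodup) : Function.Injective g :=
  fun m n hmn => inj_on_of_nodup_map ((hg (max m n)).nodup hC)
    (mem_range.mpr (by omega)) (mem_range.mpr (by omega)) hmn

theorem stable {p : ℕ} (hg : Enumerates U C (g p) (fun n => g (p + n))) (hC : C.Nodup) :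
    Stable g (g p) := by
  refine ⟨p, rfl, fun n hpn => ?_⟩
  obtain ⟨k, rfl⟩ := Nat.exists_eq_add_of_lt hpn
  obtain ⟨-, η, hη, -⟩ := hg.mem_subtreeD (k + 1)
  exact ⟨⟨η, hη.symm⟩, fun h =>
    k.succ_ne_zero (hg.injective hC (show g (p + (k + 1)) = g (p + 0) from h.symm))⟩

theorem of_forall_mem_subtreeD {c : ℕ} {Cs : List ℕ} (hg : Enumerates U (c :: Cs) lam g)
    (hc : c ∉ Cs) (hall : ∀ n, g n ∈ subtreeD U Cs lam) : Enumerates U Cs lam g := by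
  classical
  intro m
  obtain ⟨M, hM, hML⟩ := (hg m).exists_isBlockExtension
  rwa [← hML.eq_takeWhile hc hM, takeWhile_eq_self_iff.mpr (by simpa using fun n _ => hall n)]
    at hM

theorem exists_blocks {c : ℕ} {Cs : List ℕ} (hg : Enumerates U (c :: Cs) lam g)
    (hnd : (c :: Cs).Nodup) {a : ℕ} (hlt : ∀ n < a, g n ∈ subtreeD U Cs lam)
    (ha : g a ∉ subtreeD U Cs lam) {m : ℕ} (ham : a ≤ m) :
    ∃ Ls : List (List (List ℕ)), (range (m + 1)).map g = (range a).map g ++ Ls.flatten ∧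
      ∀ B ∈ Ls, DVisit U (Cs ++ [c]) B.headI B ∧ ∃ b T, B = b :: T ∧
        (∃ μ ∈ (range a).map g, b = μ ++ [c]) ∧ ∀ t ∈ T, ¬∃ μ ∈ (range a).map g, t = μ ++ [c] := by
  classical
  obtain ⟨M, hM, hML⟩ := (hg m).exists_isBlockExtension
  have hMa : M = (range a).map g := by
    rw [← hML.eq_takeWhile (nodup_cons.mp hnd).1 hM, ← Nat.add_sub_cancel' ham, add_assoc,
      range_add, map_append, range_succ_eq_map, map_map, map_cons,
      takeWhile_append_of_pos (by simpa using hlt), Function.comp_apply, add_zero,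
      takeWhile_cons_of_neg (by simpa using ha), append_nil]
  subst hMa
  obtain ⟨Ls, hL, hLs⟩ := hML
  exact ⟨Ls, hL, fun B hB => ⟨(hLs B hB).2, B.headI, B.tail, (hLs B hB).2.eq_cons_tail,
    (hLs B hB).1, hM.not_child_of_mem_tail hnd (hLs B hB).2 (hLs B hB).1⟩⟩

theorem exists_child_restart {c : ℕ} {Cs : List ℕ} (hg : Enumerates U (c :: Cs) lam g)
    (hnd : (c :: Cs).Nodup) (hout : ∃ n, g n ∉ subtreeD U Cs lam) :
    ∃ p, (∃ j < p, g p = g j ++ [c]) ∧ Enumerates U (Cs ++ [c]) (g p) (fun n => g (p + n)) := by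
  classical
  set a := Nat.find hout
  have hblocks {m : ℕ} (ham : a ≤ m) := hg.exists_blocks hnd
    (fun n hn => not_not.mp (Nat.find_min hout hn)) (Nat.find_spec hout) ham
  set M := (range a).map g
  let S := {n | a ≤ n ∧ ∃ μ ∈ M, g n = μ ++ [c]}
  have hSfin : S.Finite := ((M.map (· ++ [c])).finite_toSet.preimage
    (hg.injective hnd).injOn).subset fun n ⟨_, μ, hμ, hn⟩ => mem_map.mpr ⟨μ, hμ, hn.symm⟩
  have haS : a ∈ S := by
    obtain ⟨Ls, hL, hLs⟩ := hblocks le_rfl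
    rw [range_succ, map_append, map_singleton] at hL
    exact ⟨le_rfl, head_of_flatten_eq_cons (fun B hB => (hLs B hB).2)
      (append_cancel_left hL).symm⟩
  obtain ⟨p, ⟨hap, μ, hμ, hp⟩, hpmax⟩ := S.exists_max_image id hSfin ⟨a, haS⟩
  obtain ⟨j, hj, rfl⟩ : ∃ j < a, g j = μ := by simpa [M] using hμ
  refine ⟨p, ⟨j, by omega, hp⟩, fun m => ?_⟩
  obtain ⟨Ls, hL, hLs⟩ := hblocks (m := p + m) (by omega)
  have hsplit : (range (p + m + 1)).map g = M ++
      ((range (p - a)).map (fun n => g (a + n)) ++ (range (m + 1)).map (fun n => g (p + n))) := by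
    conv_lhs => rw [add_assoc, range_add, ← Nat.add_sub_cancel' hap, range_add]
    simp [M, Nat.add_sub_cancel' hap, Function.comp_def]
  have hlast : (range (m + 1)).map (fun n => g (p + n)) =
      g p :: (range m).map (fun n => g (p + (n + 1))) := by
    simp [range_succ_eq_map]
  have hmem := mem_of_flatten_eq_append_cons (fun B hB => (hLs B hB).2)
    ((append_cancel_left (hL.symm.trans hsplit)).trans (by rw [hlast])) ⟨g j, hμ, hp⟩ ?_
  · rw [hlast]
    exact (hLs _ hmem).1
  · simp only [mem_map, mem_range]
    rintro _ ⟨n, -, rfl⟩ hchild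
    have := hpmax _ ⟨by omega, hchild⟩
    simp only [id] at this
    omega

end Enumerates

def IsChildRestart (U : Set (List ℕ)) (d : ℕ) (g : ℕ → List ℕ) (p : ℕ) : Prop :=
  (∃ j < p, g p = g j ++ [d]) ∧
    ∃ C : List ℕ, C.Nodup ∧ d ∈ C ∧ Enumerates U C (g p) (fun n => g (p + n))

theorem IsChildRestart.pos {d p : ℕ} {g : ℕ → List ℕ} (h : IsChildRestart U d g p) : 0 < p :=
  let ⟨⟨j, hj, _⟩, _⟩ := h; by omega

theorem IsChildRestart.of_shift {d p q : ℕ} {g : ℕ → List ℕ}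
    (h : IsChildRestart U d (fun n => g (p + n)) q) : IsChildRestart U d g (p + q) := by
  obtain ⟨⟨j, hj, hchild⟩, C, hC, hd, hg⟩ := h
  exact ⟨⟨p + j, by omega, hchild⟩, C, hC, hd, by simpa only [Nat.add_assoc] using hg⟩

open Filter

theorem frequently_atTop_shift {P : ℕ → Prop} (h : ∃ᶠ n in atTop, P n) (p : ℕ) :
    ∃ᶠ n in atTop, P (p + n) := by
  rw [frequently_atTop] at h ⊢
  intro q
  obtain ⟨n, hn, hP⟩ := h (p + q)
  exact ⟨n - p, by omega, by rwa [Nat.add_sub_cancel' (by omega)]⟩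

theorem Enumerates.exists_isChildRestart {d : ℕ} {C lam : List ℕ} {g : ℕ → List ℕ}
    (hg : Enumerates U C lam g) (hC : C.Nodup) (hd : d ∈ C)
    (hfreq : ∃ᶠ n in atTop, (g n).getLast? = some d) : ∃ p, IsChildRestart U d g p := by
  obtain ⟨k, hk⟩ : ∃ k, C.idxOf d = k := ⟨_, rfl⟩
  induction k generalizing C lam g with
  | zero =>
    obtain ⟨c, Cs, rfl⟩ := exists_cons_of_ne_nil (ne_nil_of_mem hd)
    obtain rfl : c = d := by
      by_contra hcd
      simp [idxOf_cons_ne _ hcd] at hk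
    have hc := (nodup_cons.mp hC).1
    obtain ⟨n, hlast, hn⟩ := (hfreq.and_eventually (eventually_gt_atTop 0)).exists
    have hne : g n ≠ lam := hg.apply_zero ▸ (hg.injective hC).ne hn.ne'
    obtain ⟨p, hchild, hp⟩ :=
      hg.exists_child_restart hC ⟨n, not_mem_subtreeD_of_getLast? hc hne hlast⟩
    exact ⟨p, hchild, Cs ++ [c], (perm_append_singleton c Cs).nodup_iff.mpr hC, by simp, hp⟩
  | succ k ih =>
    obtain ⟨c, Cs, rfl⟩ := exists_cons_of_ne_nil (ne_nil_of_mem hd)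
    have hcd : c ≠ d := by rintro rfl; simp at hk
    have hdCs : d ∈ Cs := (mem_cons.mp hd).resolve_left hcd.symm
    rw [idxOf_cons_ne _ hcd, Nat.succ_inj] at hk
    have hc := (nodup_cons.mp hC).1
    by_cases hall : ∀ n, g n ∈ subtreeD U Cs lam
    · exact ih (hg.of_forall_mem_subtreeD hc hall) (nodup_cons.mp hC).2 hdCs hfreq hk
    · obtain ⟨p, -, hp⟩ := hg.exists_child_restart hC (not_forall.mp hall)
      obtain ⟨q, hq⟩ := ih hp ((perm_append_singleton c Cs).nodup_iff.mpr hC)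
        (mem_append_left _ hdCs) (frequently_atTop_shift hfreq p)
        (by rw [idxOf_append_of_mem hdCs, hk])
      exact ⟨p + q, hq.of_shift⟩

theorem Enumerates.exists_isChildRestart_gt {d : ℕ} {C lam : List ℕ} {g : ℕ → List ℕ}
    (hg : Enumerates U C lam g) (hC : C.Nodup) (hd : d ∈ C)
    (hfreq : ∃ᶠ n in atTop, (g n).getLast? = some d) (q : ℕ) :
    ∃ p, q < p ∧ IsChildRestart U d g p := by
  induction q generalizing C lam g with
  | zero =>
    obtain ⟨p, hp⟩ := hg.exists_isChildRestart hC hd hfreq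
    exact ⟨p, hp.pos, hp⟩
  | succ q ih =>
    obtain ⟨p, hp⟩ := hg.exists_isChildRestart hC hd hfreq
    obtain ⟨C', hC', hdC', hg'⟩ := hp.2
    obtain ⟨p', hqp', hp'⟩ := ih hg' hC' hdC' (frequently_atTop_shift hfreq p)
    exact ⟨p + p', by have := hp.pos; omega, hp'.of_shift⟩

end

theorem stable_children_general (U : Set (List ℕ))
    (D : List ℕ) (hDnd : D.Nodup)
    (lam : List ℕ)
    (f : ℕ → List ℕ) (hf : Enumerates U D lam f)
    (i : ℕ) (hi : i < D.length)
    (hmany : ∀ q : ℕ, ∃ m, q < m ∧ ∃ ν ∈ Set.range f, f m = ν ++ [D.get ⟨i, hi⟩]) :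
    ∀ q : ℕ, ∃ m, q < m ∧ Stable f (f m) ∧
      ∃ ν ∈ Set.range f, f m = ν ++ [D.get ⟨i, hi⟩] := by
  have hfreq : ∃ᶠ m in Filter.atTop, (f m).getLast? = some (D.get ⟨i, hi⟩) :=
    Filter.frequently_atTop'.mpr fun q =>
      let ⟨m, hqm, _, _, hm⟩ := hmany q
      ⟨m, hqm, by rw [hm, getLast?_concat]⟩
  intro q
  obtain ⟨m, hqm, ⟨j, -, hj⟩, C, hC, -, hrestart⟩ :=
    hf.exists_isChildRestart_gt hDnd (D.get_mem ⟨i, hi⟩) hfreq q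
  exact ⟨m, hqm, hrestart.stable hC, f j, ⟨j, rfl⟩, hj⟩

/-- if infinitely many nodes of the complete D-visit are d_i-children
of nodes of the visit, then infinitely many *stable* nodes are d_i-children of
nodes of the visit. -/
theorem stable_children (k : ℕ) (U : Set (List ℕ)) (hU : IsKTree k U)
    (D : List ℕ) (hDnd : D.Nodup) (hDk : ∀ d ∈ D, d < k)
    (lam : List ℕ) (hlam : lam ∈ U)
    (hinf : (subtreeD U D lam).Infinite)
    (f : ℕ → List ℕ) (hf : Enumerates U D lam f)
    (i : ℕ) (hi : i < D.length)
    (hmany : ∀ q : ℕ, ∃ m, q < m ∧ ∃ ν ∈ Set.range f, f m = ν ++ [D.get ⟨i, hi⟩]) :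
    ∀ q : ℕ, ∃ m, q < m ∧ Stable f (f m) ∧
      ∃ ν ∈ Set.range f, f m = ν ++ [D.get ⟨i, hi⟩] :=
  stable_children_general U D hDnd lam f hf i hi hmany
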